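/- For every c ∈ ℂ with Re(c) > 0, the closure of the numerical range of H_c, i.e. the closure of {Q_c(f) : f ∈ 𝒮(ℝ), ‖f‖ = 1}, equals the set W := {t₁ + c·t₂ ∈ ℂ : t₁, t₂ ≥ 0, t₁·t₂ ≥ 1/4}. -/

import Mathlib

/-!
For `‖f‖ = 1` we have `Q_c(f) = t₁ + c t₂` with `t₁ = ‖f'‖²` and `t₂ = ‖x f‖²`. Integrating
`(x |f|²)' = |f|² + 2x Re(f̄ f')` over `ℝ` and applying Cauchy–Schwarz gives Heisenberg's
inequality `t₁ t₂ ≥ 1/4`, so the numerical range lies in `W`. Conversely every point of `W` is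
attained by a normalized Gaussian `exp(-b x²)` with complex `b`: the same integration by parts
gives `t₂ = 1/(4 Re b)`, and `f' = -2bx f` gives `t₁ = |b|² / Re b`. Finally, as `Re c > 0`, the
map `(t₁, t₂) ↦ t₁ + c t₂` is proper on the closed quadrant, so `W` is closed.
-/

open MeasureTheory Complex

/-- The quadratic form of the complex harmonic oscillator,
`Q_c(f) = ∫ |f'|² + c ∫ x² |f|²`, evaluated on a Schwartz function. -/
noncomputable def harmonicOscillatorForm (c : ℂ) (f : SchwartzMap ℝ ℂ) : ℂ :=
  ((∫ x : ℝ, ‖deriv (f : ℝ → ℂ) x‖ ^ 2 : ℝ) : ℂ) +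
    c * ((∫ x : ℝ, x ^ 2 * ‖f x‖ ^ 2 : ℝ) : ℂ)

open Filter
open scoped Nat RealInnerProductSpace SchwartzMap

theorem sq_integral_mul_le_integral_sq_mul_integral_sq {α : Type*} [MeasurableSpace α]
    {μ : Measure α} {u v : α → ℝ} (hu₀ : 0 ≤ᵐ[μ] u) (hv₀ : 0 ≤ᵐ[μ] v) (hu : MemLp u 2 μ)
    (hv : MemLp v 2 μ) :
    (∫ a, u a * v a ∂μ) ^ 2 ≤ (∫ a, u a ^ 2 ∂μ) * ∫ a, v a ^ 2 ∂μ := by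
  have h := integral_mul_le_Lp_mul_Lq_of_nonneg Real.HolderConjugate.two_two hu₀ hv₀
    (by simpa using hu) (by simpa using hv)
  simp only [Real.rpow_two, ← Real.sqrt_eq_rpow] at h
  have huv : 0 ≤ ∫ a, u a * v a ∂μ :=
    integral_nonneg_of_ae (by filter_upwards [hu₀, hv₀] with a ha hb using mul_nonneg ha hb)
  calc (∫ a, u a * v a ∂μ) ^ 2
      ≤ (√(∫ a, u a ^ 2 ∂μ) * √(∫ a, v a ^ 2 ∂μ)) ^ 2 := pow_le_pow_left₀ huv h 2
    _ = (∫ a, u a ^ 2 ∂μ) * ∫ a, v a ^ 2 ∂μ := by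
        rw [mul_pow, Real.sq_sqrt (integral_nonneg fun a ↦ sq_nonneg _),
          Real.sq_sqrt (integral_nonneg fun a ↦ sq_nonneg _)]

theorem abs_pow_mul_exp_neg_mul_sq_le {β : ℝ} (hβ : 0 < β) (m : ℕ) (x : ℝ) :
    |x| ^ m * Real.exp (-β * x ^ 2) ≤ 1 + m ! / β ^ m := by
  have hpow : |x| ^ m ≤ 1 + (x ^ 2) ^ m := by
    rcases le_total |x| 1 with h | h
    · linarith [pow_le_one₀ (n := m) (abs_nonneg x) h, pow_nonneg (sq_nonneg x) m]
    · calc |x| ^ m ≤ |x| ^ (2 * m) := pow_le_pow_right₀ h (by omega)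
        _ = (x ^ 2) ^ m := by rw [pow_mul, sq_abs]
        _ ≤ 1 + (x ^ 2) ^ m := le_add_of_nonneg_left zero_le_one
  have hexp : Real.exp (-β * x ^ 2) ≤ 1 := Real.exp_le_one_iff.2 (by nlinarith [sq_nonneg x])
  have htail : (x ^ 2) ^ m * Real.exp (-β * x ^ 2) ≤ m ! / β ^ m := by
    have h := Real.pow_div_factorial_le_exp _ (by positivity : 0 ≤ β * x ^ 2) m
    rw [div_le_iff₀ (by positivity), mul_pow] at h
    rw [le_div_iff₀ (by positivity), neg_mul, Real.exp_neg]
    have := Real.exp_pos (β * x ^ 2)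
    calc (x ^ 2) ^ m * (Real.exp (β * x ^ 2))⁻¹ * β ^ m
        = β ^ m * (x ^ 2) ^ m * (Real.exp (β * x ^ 2))⁻¹ := by ring
      _ ≤ Real.exp (β * x ^ 2) * m ! * (Real.exp (β * x ^ 2))⁻¹ := by gcongr
      _ = m ! := by field_simp
  nlinarith [Real.exp_pos (-β * x ^ 2)]

theorem hasDerivAt_cexp_neg_mul_sq (b z : ℂ) :
    HasDerivAt (fun z : ℂ ↦ cexp (-b * z ^ 2)) (-2 * b * z * cexp (-b * z ^ 2)) z := by
  refine ((hasDerivAt_pow 2 z).const_mul (-b)).cexp.congr_deriv ?_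
  push_cast
  ring

theorem exists_iteratedDeriv_cexp_neg_mul_sq_eq (b : ℂ) (n : ℕ) :
    ∃ p : Polynomial ℂ, ∀ x : ℝ,
      iteratedDeriv n (fun x : ℝ ↦ cexp (-b * x ^ 2)) x = p.eval (x : ℂ) * cexp (-b * x ^ 2) := by
  induction n with
  | zero => exact ⟨1, fun x ↦ by simp⟩
  | succ n ih =>
    obtain ⟨p, hp⟩ := ih
    refine ⟨Polynomial.derivative p - Polynomial.C (2 * b) * Polynomial.X * p, fun x ↦ ?_⟩
    have hd := ((p.hasDerivAt (x : ℂ)).fun_mul (hasDerivAt_cexp_neg_mul_sq b x)).comp_ofReal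
    rw [iteratedDeriv_succ, funext hp, hd.deriv]
    simp only [Polynomial.eval_sub, Polynomial.eval_mul, Polynomial.eval_C, Polynomial.eval_X]
    ring

theorem exists_bound_pow_mul_norm_eval_mul_cexp_neg_mul_sq {b : ℂ} (hb : 0 < b.re)
    (p : Polynomial ℂ) (k : ℕ) :
    ∃ C, ∀ x : ℝ, ‖x‖ ^ k * ‖p.eval (x : ℂ) * cexp (-b * x ^ 2)‖ ≤ C := by
  induction p using Polynomial.induction_on' with
  | add p q hp hq =>
    obtain ⟨C₁, h₁⟩ := hp
    obtain ⟨C₂, h₂⟩ := hq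
    refine ⟨C₁ + C₂, fun x ↦ ?_⟩
    rw [Polynomial.eval_add, add_mul]
    calc _ ≤ ‖x‖ ^ k * (‖p.eval (x : ℂ) * cexp (-b * x ^ 2)‖
            + ‖q.eval (x : ℂ) * cexp (-b * x ^ 2)‖) := by gcongr; exact norm_add_le _ _
      _ ≤ C₁ + C₂ := by rw [mul_add]; exact add_le_add (h₁ x) (h₂ x)
  | monomial i c =>
    refine ⟨‖c‖ * (1 + (k + i) ! / b.re ^ (k + i)), fun x ↦ ?_⟩
    rw [Polynomial.eval_monomial, norm_mul, norm_mul, norm_pow, norm_cexp_neg_mul_sq,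
      norm_real, Real.norm_eq_abs]
    calc _ = ‖c‖ * (|x| ^ (k + i) * Real.exp (-b.re * x ^ 2)) := by ring
      _ ≤ _ := by gcongr; exact abs_pow_mul_exp_neg_mul_sq_le hb (k + i) x

theorem Complex.real_inner_mul_self_right (w z : ℂ) : ⟪z, w * z⟫ = w.re * ‖z‖ ^ 2 := by
  rw [Complex.inner, mul_assoc, mul_conj, re_mul_ofReal, Complex.normSq_eq_norm_sq]

theorem isClosed_image_ofReal_add_mul_ofReal {c : ℂ} (hc : 0 < c.re) {S : Set (ℝ × ℝ)}
    (hS : IsClosed S) (hS₀ : S ⊆ {t | 0 ≤ t.1 ∧ 0 ≤ t.2}) :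
    IsClosed ((fun t : ℝ × ℝ ↦ (t.1 : ℂ) + c * t.2) '' S) := by
  set L := fun t : ℝ × ℝ ↦ (t.1 : ℂ) + c * t.2
  have hL : Continuous L := by fun_prop
  refine isClosed_of_closure_subset fun z hz ↦ ?_
  -- on the quadrant `Re (L t)` controls `t`, so the part of `S` mapped near `z` is compact
  set K := S ∩ L ⁻¹' Metric.closedBall z 1
  have hK : IsCompact K := by
    refine Metric.isCompact_of_isClosed_isBounded
      (hS.inter (Metric.isClosed_closedBall.preimage hL)) ?_
    refine isBounded_iff_forall_norm_le.2 ⟨(‖z‖ + 1) * (1 + c.re⁻¹), fun t ⟨htS, htz⟩ ↦ ?_⟩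
    obtain ⟨h₁, h₂⟩ := hS₀ htS
    have hre : t.1 + c.re * t.2 ≤ ‖z‖ + 1 := by
      calc t.1 + c.re * t.2 = (L t).re := by simp [L]
        _ ≤ ‖L t‖ := re_le_norm _
        _ ≤ ‖z‖ + 1 := by
          have htz' : ‖L t - z‖ ≤ 1 := mem_closedBall_iff_norm.1 htz
          linarith [norm_le_norm_add_norm_sub' (L t) z]
    have ht₂ : t.2 ≤ (‖z‖ + 1) * c.re⁻¹ := by
      rw [← div_eq_mul_inv, le_div_iff₀ hc]
      nlinarith
    rw [Prod.norm_def, Real.norm_of_nonneg h₁, Real.norm_of_nonneg h₂]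
    have : 0 ≤ (‖z‖ + 1) * c.re⁻¹ := by positivity
    exact max_le (by nlinarith) (by nlinarith)
  have hzK : z ∈ closure (L '' K) := by
    refine closure_mono ?_ (Metric.isOpen_ball.inter_closure ⟨Metric.mem_ball_self one_pos, hz⟩)
    rintro _ ⟨hw, t, htS, rfl⟩
    exact ⟨t, ⟨htS, Metric.ball_subset_closedBall hw⟩, rfl⟩
  exact Set.image_mono Set.inter_subset_left ((hK.image hL).isClosed.closure_subset hzK)

namespace SchwartzMap

section Integrability

variable {D V W : Type*} [NormedAddCommGroup D] [NormedSpace ℝ D] [MeasurableSpace D]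
  [BorelSpace D] [SecondCountableTopology D] [NormedAddCommGroup V] [NormedSpace ℝ V]
  [NormedAddCommGroup W] [NormedSpace ℝ W] {μ : Measure D} [μ.HasTemperateGrowth]

theorem integrable_pow_mul_norm_mul_norm (f : 𝓢(D, V)) (g : 𝓢(D, W)) (k : ℕ) :
    Integrable (fun x ↦ ‖x‖ ^ k * ‖f x‖ * ‖g x‖) μ :=
  (f.integrable_pow_mul μ k).mul_bdd g.continuous.norm.aestronglyMeasurable
    (Eventually.of_forall fun x ↦ by simpa using norm_le_seminorm ℝ g x)

end Integrability

section Heisenberg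

variable {F : Type*} [NormedAddCommGroup F] [InnerProductSpace ℝ F]

theorem integrable_mul_inner_deriv (f : 𝓢(ℝ, F)) :
    Integrable fun x ↦ x * ⟪f x, deriv f x⟫ := by
  have hcont : Continuous (deriv f) := (derivCLM ℝ F f).continuous
  refine (integrable_pow_mul_norm_mul_norm f (derivCLM ℝ F f) 1).mono' (by fun_prop)
    (Eventually.of_forall fun x ↦ ?_)
  rw [norm_mul, pow_one, mul_assoc, derivCLM_apply]
  exact mul_le_mul_of_nonneg_left (abs_real_inner_le_norm _ _) (norm_nonneg x)

theorem integral_norm_sq_eq_neg_two_mul_integral_mul_inner_deriv (f : 𝓢(ℝ, F)) :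
    ∫ x, ‖f x‖ ^ 2 = -2 * ∫ x, x * ⟪f x, deriv f x⟫ := by
  have hderiv : ∀ x, HasDerivAt (fun x ↦ x * ‖f x‖ ^ 2)
      (‖f x‖ ^ 2 + 2 * (x * ⟪f x, deriv f x⟫)) x := fun x ↦ by
    simpa [mul_left_comm] using (hasDerivAt_id' x).fun_mul (f.hasDerivAt x).norm_sq
  have hsq : Integrable (fun x ↦ ‖f x‖ ^ 2) := by
    simpa [sq, mul_assoc] using integrable_pow_mul_norm_mul_norm (μ := volume) f f 0
  have hmoment : Integrable (fun x ↦ x * ‖f x‖ ^ 2) := by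
    refine (integrable_pow_mul_norm_mul_norm f f 1).mono' (by fun_prop)
      (Eventually.of_forall fun x ↦ ?_)
    simp [norm_mul, sq, mul_assoc]
  have hinner := (integrable_mul_inner_deriv f).const_mul 2
  have h := integral_eq_zero_of_hasDerivAt_of_integrable hderiv (hsq.add hinner) hmoment
  rw [integral_add hsq hinner, integral_const_mul] at h
  linarith

theorem sq_integral_norm_sq_le (f : 𝓢(ℝ, F)) :
    (∫ x, ‖f x‖ ^ 2) ^ 2 ≤ 4 * (∫ x, x ^ 2 * ‖f x‖ ^ 2) * ∫ x, ‖deriv f x‖ ^ 2 := by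
  set f' := derivCLM ℝ F f
  have hu : MemLp (fun x ↦ |x| * ‖f x‖) 2 := by
    refine (memLp_two_iff_integrable_sq (by fun_prop)).2 ?_
    refine (integrable_pow_mul_norm_mul_norm f f 2).congr (Eventually.of_forall fun x ↦ ?_)
    simp only [Real.norm_eq_abs]
    ring
  have hv : MemLp (fun x ↦ ‖f' x‖) 2 := by
    refine (memLp_two_iff_integrable_sq (by fun_prop)).2 ?_
    simpa [sq] using integrable_pow_mul_norm_mul_norm (μ := volume) f' f' 0
  have hcs := sq_integral_mul_le_integral_sq_mul_integral_sq
    (Eventually.of_forall fun x ↦ by positivity) (Eventually.of_forall fun x ↦ by positivity)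
    hu hv
  have hle : ∫ x, ‖f x‖ ^ 2 ≤ 2 * ∫ x, |x| * ‖f x‖ * ‖f' x‖ := by
    rw [integral_norm_sq_eq_neg_two_mul_integral_mul_inner_deriv, neg_mul, ← mul_neg,
      ← integral_neg]
    refine mul_le_mul_of_nonneg_left (integral_mono (integrable_mul_inner_deriv f).neg
      (hu.integrable_mul hv) fun x ↦ ?_) zero_le_two
    have h := mul_le_mul_of_nonneg_left (abs_real_inner_le_norm (f x) (f' x)) (abs_nonneg x)
    rw [← abs_mul] at h
    exact (neg_le_abs _).trans (h.trans_eq (mul_assoc _ _ _).symm)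
  have hN : 0 ≤ ∫ x, ‖f x‖ ^ 2 := integral_nonneg fun x ↦ by positivity
  simp only [mul_pow, sq_abs, derivCLM_apply, f'] at hcs hle
  nlinarith

end Heisenberg

noncomputable def gaussian (b : ℂ) (hb : 0 < b.re) : 𝓢(ℝ, ℂ) where
  toFun x := cexp (-b * x ^ 2)
  smooth' := (contDiff_const.mul (ofRealCLM.contDiff.pow 2)).cexp
  decay' k n := by
    obtain ⟨p, hp⟩ := exists_iteratedDeriv_cexp_neg_mul_sq_eq b n
    obtain ⟨C, hC⟩ := exists_bound_pow_mul_norm_eval_mul_cexp_neg_mul_sq hb p k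
    exact ⟨C, fun x ↦ by rw [norm_iteratedFDeriv_eq_norm_iteratedDeriv, hp]; exact hC x⟩

section Gaussian

variable {b : ℂ} (hb : 0 < b.re)

theorem gaussian_apply (x : ℝ) : gaussian b hb x = cexp (-b * x ^ 2) := rfl

theorem deriv_gaussian (x : ℝ) : deriv (gaussian b hb) x = -2 * b * x * gaussian b hb x :=
  (hasDerivAt_cexp_neg_mul_sq b x).comp_ofReal.deriv

theorem integral_norm_gaussian_sq_pos : 0 < ∫ x, ‖gaussian b hb x‖ ^ 2 := by
  have h : ∀ x : ℝ, ‖gaussian b hb x‖ ^ 2 = Real.exp (-(2 * b.re) * x ^ 2) := fun x ↦ by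
    rw [gaussian_apply, norm_cexp_neg_mul_sq, ← Real.exp_nat_mul]
    ring_nf
  simp_rw [h, integral_gaussian]
  exact Real.sqrt_pos.2 (div_pos Real.pi_pos (by linarith))

theorem integral_sq_mul_norm_gaussian_sq :
    ∫ x, x ^ 2 * ‖gaussian b hb x‖ ^ 2 = (∫ x, ‖gaussian b hb x‖ ^ 2) / (4 * b.re) := by
  have h := integral_norm_sq_eq_neg_two_mul_integral_mul_inner_deriv (gaussian b hb)
  have hinner : ∀ x : ℝ, x * ((-2 * b * x).re * ‖gaussian b hb x‖ ^ 2)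
      = -2 * b.re * (x ^ 2 * ‖gaussian b hb x‖ ^ 2) := fun x ↦ by
    rw [re_mul_ofReal, mul_re]
    simp only [neg_re, re_ofNat, neg_im, im_ofNat]
    ring
  simp_rw [deriv_gaussian, Complex.real_inner_mul_self_right, hinner, integral_const_mul] at h
  rw [h]
  field_simp
  ring

theorem integral_norm_deriv_gaussian_sq :
    ∫ x, ‖deriv (gaussian b hb) x‖ ^ 2 = 4 * ‖b‖ ^ 2 * ∫ x, x ^ 2 * ‖gaussian b hb x‖ ^ 2 := by
  rw [← integral_const_mul]
  congr 1 with x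
  rw [deriv_gaussian, norm_mul, norm_mul, norm_mul, norm_real, Real.norm_eq_abs, norm_neg,
    Complex.norm_ofNat, mul_pow, mul_pow, mul_pow, sq_abs]
  ring

end Gaussian

theorem exists_normalized_gaussian {b : ℂ} (hb : 0 < b.re) :
    ∃ f : 𝓢(ℝ, ℂ), ∫ x, ‖f x‖ ^ 2 = 1 ∧ ∫ x, ‖deriv f x‖ ^ 2 = ‖b‖ ^ 2 / b.re ∧
      ∫ x, x ^ 2 * ‖f x‖ ^ 2 = 1 / (4 * b.re) := by
  set N := ∫ x, ‖gaussian b hb x‖ ^ 2 with hN_def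
  have hN : 0 < N := integral_norm_gaussian_sq_pos hb
  have hscale : ∀ z : ℂ, ‖(√N)⁻¹ • z‖ ^ 2 = N⁻¹ * ‖z‖ ^ 2 := fun z ↦ by
    rw [norm_smul, mul_pow, Real.norm_eq_abs, sq_abs, inv_pow, Real.sq_sqrt hN.le]
  have hderiv : ∀ x, deriv ((√N)⁻¹ • gaussian b hb : 𝓢(ℝ, ℂ)) x
      = (√N)⁻¹ • deriv (gaussian b hb) x := fun x ↦
    deriv_const_smul _ (gaussian b hb).differentiableAt
  refine ⟨(√N)⁻¹ • gaussian b hb, ?_, ?_, ?_⟩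
  · simp_rw [smul_apply, hscale, integral_const_mul]
    exact inv_mul_cancel₀ hN.ne'
  · simp_rw [hderiv, hscale, integral_const_mul, integral_norm_deriv_gaussian_sq,
      integral_sq_mul_norm_gaussian_sq, ← hN_def]
    field_simp
  · simp_rw [smul_apply, hscale, mul_left_comm _ N⁻¹, integral_const_mul,
      integral_sq_mul_norm_gaussian_sq, ← hN_def]
    field_simp

theorem exists_normalized_of_one_div_four_le_mul {t₁ t₂ : ℝ} (ht₂ : 0 ≤ t₂)
    (h : 1 / 4 ≤ t₁ * t₂) :
    ∃ f : 𝓢(ℝ, ℂ), ∫ x, ‖f x‖ ^ 2 = 1 ∧ ∫ x, ‖deriv f x‖ ^ 2 = t₁ ∧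
      ∫ x, x ^ 2 * ‖f x‖ ^ 2 = t₂ := by
  replace ht₂ : 0 < t₂ := ht₂.lt_of_ne (by rintro rfl; norm_num at h)
  set β := 1 / (4 * t₂)
  have hβ : 0 < β := by positivity
  have hβt₁ : 0 ≤ β * (t₁ - β) := mul_nonneg hβ.le (by
    rw [sub_nonneg, div_le_iff₀ (by positivity)]
    linarith)
  obtain ⟨f, hf, h₁, h₂⟩ := exists_normalized_gaussian (b := ⟨β, √(β * (t₁ - β))⟩) hβ
  refine ⟨f, hf, ?_, ?_⟩
  · rw [h₁, Complex.sq_norm, normSq_mk, Real.mul_self_sqrt hβt₁]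
    field_simp
    ring
  · rw [h₂]
    simp only [β]
    field_simp

end SchwartzMap

theorem closure_numericalRange_harmonicOscillator (c : ℂ) (hc : 0 < c.re) :
    closure {z : ℂ | ∃ f : SchwartzMap ℝ ℂ,
        (∫ x : ℝ, ‖f x‖ ^ 2 : ℝ) = 1 ∧ z = harmonicOscillatorForm c f} =
    {z : ℂ | ∃ t₁ t₂ : ℝ, 0 ≤ t₁ ∧ 0 ≤ t₂ ∧ 1 / 4 ≤ t₁ * t₂ ∧
        z = (t₁ : ℂ) + c * (t₂ : ℂ)} := by
  set L := fun t : ℝ × ℝ ↦ (t.1 : ℂ) + c * t.2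
  set S : Set (ℝ × ℝ) := {t | 0 ≤ t.1 ∧ 0 ≤ t.2 ∧ 1 / 4 ≤ t.1 * t.2}
  have hW : {z : ℂ | ∃ t₁ t₂ : ℝ, 0 ≤ t₁ ∧ 0 ≤ t₂ ∧ 1 / 4 ≤ t₁ * t₂ ∧
      z = (t₁ : ℂ) + c * (t₂ : ℂ)} = L '' S := by
    ext z
    simp [L, S, eq_comm, and_assoc]
  have hrange : {z : ℂ | ∃ f : SchwartzMap ℝ ℂ,
      (∫ x : ℝ, ‖f x‖ ^ 2 : ℝ) = 1 ∧ z = harmonicOscillatorForm c f} = L '' S := by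
    ext z
    constructor
    · rintro ⟨f, hf, rfl⟩
      have heisenberg := f.sq_integral_norm_sq_le
      rw [hf] at heisenberg
      exact ⟨(_, _), ⟨integral_nonneg fun x ↦ by positivity,
        integral_nonneg fun x ↦ by positivity, by linarith⟩, rfl⟩
    · rintro ⟨⟨t₁, t₂⟩, ⟨-, ht₂, ht⟩, rfl⟩
      obtain ⟨f, hf, h₁, h₂⟩ := SchwartzMap.exists_normalized_of_one_div_four_le_mul ht₂ ht
      exact ⟨f, hf, by rw [harmonicOscillatorForm, h₁, h₂]⟩
  have hS : IsClosed S := (isClosed_le continuous_const continuous_fst).inter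
    ((isClosed_le continuous_const continuous_snd).inter
      (isClosed_le continuous_const (continuous_fst.mul continuous_snd)))
  rw [hrange, hW]
  exact (isClosed_image_ofReal_add_mul_ofReal hc hS fun t ht ↦ ⟨ht.1, ht.2.1⟩).closure_eq
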